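/- Let T be a spherically homogeneous rooted tree, let G ≤ Aut(T) be a weakly branch group, and let H₁, H₂ ≤ G be subgroups each of which is k-subnormal in G for some k ∈ ℕ. If [H₁, H₂] = 1, then Supp(H₁) ∩ Supp(H₂) = ∅. -/

import Mathlib

open Equiv

namespace PaperDefs


/-! ### Spherically homogeneous rooted trees -/

variable (A : ℕ → Type)

/-- Vertices of the spherically homogeneous rooted tree determined by the
sequence of alphabets `A`: words `a₁a₂⋯aₙ` with `aᵢ ∈ A i`. -/
def Vertex : Type := Σ n : ℕ, ∀ i : Fin n, A i

/-- The prefix relation on vertices. -/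
def IsPref (v w : Vertex A) : Prop :=
  ∃ h : v.1 ≤ w.1, ∀ i : Fin v.1, v.2 i = w.2 (Fin.castLE h i)

/-- The automorphism group of the tree: permutations of the vertex set that
preserve the prefix relation. -/
def treeAut : Subgroup (Perm (Vertex A)) where
  carrier := {g | ∀ v w, IsPref A v w ↔ IsPref A (g v) (g w)}
  one_mem' := by intro v w; simp
  mul_mem' := by
    intro a b ha hb v w
    simpa [Equiv.Perm.mul_apply] using (hb v w).trans (ha (b v) (b w))
  inv_mem' := by
    intro a ha v w
    simpa using (ha (a⁻¹ v) (a⁻¹ w)).symm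

/-- The stabiliser of the vertex `v` in `G`. -/
def stG (G : Subgroup (Perm (Vertex A))) (v : Vertex A) : Subgroup (Perm (Vertex A)) :=
  G ⊓ MulAction.stabilizer (Perm (Vertex A)) v

/-- The rigid stabiliser of the vertex `v` in `G`: elements of `G` fixing every
vertex that does not have `v` as a prefix. -/
def rist (G : Subgroup (Perm (Vertex A))) (v : Vertex A) : Subgroup (Perm (Vertex A)) where
  carrier := {g | g ∈ G ∧ ∀ w, ¬ IsPref A v w → g w = w}
  one_mem' := ⟨G.one_mem, fun w _ => by simp⟩
  mul_mem' := by
    rintro a b ⟨haG, ha⟩ ⟨hbG, hb⟩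
    refine ⟨G.mul_mem haG hbG, fun w hw => ?_⟩
    simp [Equiv.Perm.mul_apply, hb w hw, ha w hw]
  inv_mem' := by
    rintro a ⟨haG, ha⟩
    refine ⟨G.inv_mem haG, fun w hw => ?_⟩
    conv_lhs => rw [← ha w hw]
    simp

/-- The rigid stabiliser of the `n`-th level: the subgroup generated by the rigid
stabilisers of the vertices of level `n`. -/
def ristLevel (G : Subgroup (Perm (Vertex A))) (n : ℕ) : Subgroup (Perm (Vertex A)) :=
  ⨆ (v : Vertex A) (_ : v.1 = n), rist A G v

/-- `G` acts spherically transitively: transitively on every level. -/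
def SphTrans (G : Subgroup (Perm (Vertex A))) : Prop :=
  ∀ v w : Vertex A, v.1 = w.1 → ∃ g ∈ G, g v = w

/-- `G ≤ Aut T` is a weakly branch group. -/
def IsWeaklyBranch (G : Subgroup (Perm (Vertex A))) : Prop :=
  G ≤ treeAut A ∧ SphTrans A G ∧ ∀ v : Vertex A, rist A G v ≠ ⊥

/-- `G ≤ Aut T` is a branch group. -/
def IsBranch (G : Subgroup (Perm (Vertex A))) : Prop :=
  IsWeaklyBranch A G ∧ ∀ n : ℕ, (ristLevel A G n).relIndex G ≠ 0

/-! ### Boundary of the tree -/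

/-- The boundary of the tree: infinite words. -/
def Boundary : Type := ∀ i : ℕ, A i

/-- The length-`n` prefix of a boundary point. -/
def bdryPrefix (ξ : Boundary A) (n : ℕ) : Vertex A := ⟨n, fun i => ξ i⟩

/-- The support of a subgroup `H` on the boundary: boundary points moved by some
element of `H` (a boundary point is moved by a tree automorphism iff one of its
finite prefixes is moved). -/
def supp (H : Subgroup (Perm (Vertex A))) : Set (Boundary A) :=
  {ξ | ∃ h ∈ H, ∃ n : ℕ, h (bdryPrefix A ξ n) ≠ bdryPrefix A ξ n}

/-! ### Sections / projections -/

/-- The shifted alphabet sequence, describing the subtree rooted at a vertex of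
level `n`. -/
def shift (n : ℕ) : ℕ → Type := fun i => A (i + n)

/-- Concatenation of a vertex `v` of level `n` with a vertex of the subtree `T_v`
(viewed in the shifted tree). -/
def concat (n : ℕ) (v : Vertex A) (hv : v.1 = n) (w : Vertex (shift A n)) : Vertex A :=
  ⟨n + w.1, fun i =>
    if h : (i : ℕ) < n then v.2 ⟨(i : ℕ), by omega⟩
    else cast (congrArg A (by have := i.isLt; omega : (i : ℕ) - n + n = (i : ℕ)))
      (w.2 ⟨(i : ℕ) - n, by have := i.isLt; omega⟩)⟩

/-- `projStab A G n v hv` is `G_v = φ_v(St_G(v))`, the image under the projection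
`φ_v` of the stabiliser of `v` in `G`, realised as a subgroup of the automorphisms
of the subtree `T_v` (identified with the tree on the shifted alphabet sequence):
it consists of those `σ` for which some `g ∈ G` stabilises `v` and satisfies
`g (v·w) = v·(σ w)` for every vertex `w` of the subtree. -/
def projStab (G : Subgroup (Perm (Vertex A))) (n : ℕ) (v : Vertex A) (hv : v.1 = n) :
    Subgroup (Perm (Vertex (shift A n))) where
  carrier := {σ | ∃ g ∈ G, g v = v ∧ ∀ w, g (concat A n v hv w) = concat A n v hv (σ w)}
  one_mem' := ⟨1, G.one_mem, by simp, fun w => by simp⟩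
  mul_mem' := by
    rintro σ τ ⟨g, hgG, hgv, hg⟩ ⟨g', hg'G, hg'v, hg'⟩
    refine ⟨g * g', G.mul_mem hgG hg'G, by simp [Equiv.Perm.mul_apply, hg'v, hgv], fun w => ?_⟩
    simp [Equiv.Perm.mul_apply, hg' w, hg (τ w)]
  inv_mem' := by
    rintro σ ⟨g, hgG, hgv, hg⟩
    refine ⟨g⁻¹, G.inv_mem hgG, by simpa using (congrArg (⇑g⁻¹) hgv).symm, fun w => ?_⟩
    have h1 : g (concat A n v hv (σ⁻¹ w)) = concat A n v hv w := by
      rw [hg (σ⁻¹ w), ← Equiv.Perm.mul_apply, mul_inv_cancel, Equiv.Perm.one_apply]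
    calc g⁻¹ (concat A n v hv w) = g⁻¹ (g (concat A n v hv (σ⁻¹ w))) := by rw [h1]
      _ = concat A n v hv (σ⁻¹ w) := by rw [← Equiv.Perm.mul_apply, inv_mul_cancel, Equiv.Perm.one_apply]

/-! ### Group-theoretic notions -/

/-- `H` is a normal subgroup of `K` (both being subgroups of an ambient group). -/
def NormalIn {P : Type*} [Group P] (H K : Subgroup P) : Prop :=
  H ≤ K ∧ ∀ k ∈ K, ∀ h ∈ H, k * h * k⁻¹ ∈ H

/-- `H` is `k`-subnormal in `G`: there is a chain `H = c k ⊴ ⋯ ⊴ c 0 = G`. -/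
def SubnormalIn {P : Type*} [Group P] (H G : Subgroup P) (k : ℕ) : Prop :=
  ∃ c : ℕ → Subgroup P, c 0 = G ∧ c k = H ∧ ∀ i < k, NormalIn (c (i + 1)) (c i)

/-- The iterated derived subgroup `H⁽ᵏ⁾` of a subgroup `H` of an ambient group. -/
def derivedIter {P : Type*} [Group P] (H : Subgroup P) : ℕ → Subgroup P
  | 0 => H
  | k + 1 => ⁅derivedIter H k, derivedIter H k⁆

/-- The class `𝓜𝓕` of groups all of whose maximal subgroups have finite index. -/
def MF (Γ : Type*) [Group Γ] : Prop :=
  ∀ M : Subgroup Γ, IsCoatom M → M.index ≠ 0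

/-- Every proper quotient of `Γ` belongs to `𝓜𝓕`. -/
def QuotientsMF (Γ : Type*) [Group Γ] : Prop :=
  ∀ (N : Subgroup Γ) [N.Normal], N ≠ ⊥ → MF (Γ ⧸ N)

/-- `H` is a prodense subgroup of `Γ`: `HN = Γ` for every nontrivial normal `N ⊴ Γ`. -/
def Prodense {Γ : Type*} [Group Γ] (H : Subgroup Γ) : Prop :=
  ∀ N : Subgroup Γ, N.Normal → N ≠ ⊥ → H ⊔ N = ⊤

/-- `H` is a prodense subgroup of `G`, both being subgroups of an ambient group:
`H ≤ G` and `HN = G` for every nontrivial subgroup `N ≤ G` normal in `G`. -/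
def ProdenseIn {P : Type*} [Group P] (H G : Subgroup P) : Prop :=
  H ≤ G ∧ ∀ N : Subgroup P, N ≤ G → NormalIn N G → N ≠ ⊥ → H ⊔ N = G

/-- `M` is a maximal subgroup of `G` (both subgroups of an ambient group). -/
def MaximalIn {P : Type*} [Group P] (M G : Subgroup P) : Prop :=
  M < G ∧ ∀ K : Subgroup P, M < K → K ≤ G → K = G


section Aux

open scoped commutatorElement

variable {A : ℕ → Type}

theorem Equiv.Perm.apply_inv_self {α : Type*} (g : Perm α) (x : α) : g (g⁻¹ x) = x :=
  g.apply_symm_apply x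

theorem isPref_refl (v : Vertex A) : IsPref A v v := ⟨le_refl _, fun _ => rfl⟩

theorem isPref_trans {u v w : Vertex A} (h1 : IsPref A u v) (h2 : IsPref A v w) :
    IsPref A u w := by
  obtain ⟨l1, e1⟩ := h1; obtain ⟨l2, e2⟩ := h2
  exact ⟨le_trans l1 l2, fun i => by rw [e1 i, e2 (Fin.castLE l1 i)]; rfl⟩

theorem isPref_unique {u u' w : Vertex A} (h : IsPref A u w) (h' : IsPref A u' w)
    (hl : u.1 = u'.1) : u = u' := by
  obtain ⟨n, f⟩ := u; obtain ⟨n', f'⟩ := u'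
  dsimp at hl; subst hl
  obtain ⟨l, e⟩ := h; obtain ⟨l', e'⟩ := h'
  congr 1
  funext i
  exact (e i).trans (e' i).symm

/-- The prefixes of a vertex `v` biject with `Fin (v.1 + 1)`. -/
def prefEquiv (v : Vertex A) : {u : Vertex A // IsPref A u v} ≃ Fin (v.1 + 1) where
  toFun u := ⟨u.1.1, by obtain ⟨l, _⟩ := u.2; omega⟩
  invFun j := ⟨⟨j.1, fun i => v.2 ⟨i.1, by have := i.isLt; have := j.isLt; omega⟩⟩,
    ⟨show (j : ℕ) ≤ v.1 by have := j.isLt; omega, fun i => rfl⟩⟩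
  left_inv u := by
    apply Subtype.ext
    refine isPref_unique ?_ u.2 rfl
    exact ⟨show u.1.1 ≤ v.1 by obtain ⟨l, _⟩ := u.2; omega, fun i => rfl⟩
  right_inv j := rfl

theorem level_eq {g : Perm (Vertex A)} (hg : g ∈ treeAut A) (v : Vertex A) :
    (g v).1 = v.1 := by
  have e1 : {u : Vertex A // IsPref A u v} ≃ {u : Vertex A // IsPref A u (g v)} :=
    { toFun := fun u => ⟨g u.1, (hg u.1 v).mp u.2⟩
      invFun := fun u => ⟨g⁻¹ u.1, by
        have h := hg (g⁻¹ u.1) v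
        rw [Equiv.Perm.apply_inv_self] at h
        exact h.mpr u.2⟩
      left_inv := fun u => by apply Subtype.ext; simp
      right_inv := fun u => by apply Subtype.ext; simp }
  have e := (prefEquiv v).symm.trans (e1.trans (prefEquiv (g v)))
  have hc := Fintype.card_congr e
  simp only [Fintype.card_fin] at hc
  omega

theorem apply_pref {g : Perm (Vertex A)} (hg : g ∈ treeAut A) {v w : Vertex A}
    (hvw : IsPref A v w) : IsPref A (g v) (g w) := (hg v w).mp hvw

theorem fix_pref {g : Perm (Vertex A)} (hg : g ∈ treeAut A) {v w : Vertex A}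
    (hvw : IsPref A v w) (hw : g w = w) : g v = v := by
  have h1 : IsPref A (g v) w := hw ▸ apply_pref hg hvw
  exact isPref_unique h1 hvw (level_eq hg v)

/-- `g` is supported in the subtree below `v`. -/
def SuppIn (v : Vertex A) (g : Perm (Vertex A)) : Prop :=
  ∀ w, ¬ IsPref A v w → g w = w

theorem suppIn_inv {v : Vertex A} {g : Perm (Vertex A)} (h : SuppIn v g) :
    SuppIn v g⁻¹ := by
  intro w hw
  conv_lhs => rw [← h w hw]
  simp

theorem suppIn_fix {g : Perm (Vertex A)} (hg : g ∈ treeAut A) {v : Vertex A}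
    (h : SuppIn v g) : g v = v := by
  by_contra hne
  have hp : IsPref A v (g⁻¹ v) := by
    by_contra hp
    have h2 := h _ hp
    rw [Equiv.Perm.apply_inv_self] at h2
    have h3 := congrArg g h2
    rw [Equiv.Perm.apply_inv_self] at h3
    exact hne h3
  have hl : (g⁻¹ v).1 = v.1 := level_eq ((treeAut A).inv_mem hg) v
  have h4 : v = g⁻¹ v := isPref_unique hp (isPref_refl _) hl.symm
  have h5 := congrArg g h4
  rw [Equiv.Perm.apply_inv_self] at h5
  exact hne h5

theorem suppIn_pref_apply {g : Perm (Vertex A)} (hg : g ∈ treeAut A) {v : Vertex A}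
    (h : SuppIn v g) {w : Vertex A} (hw : IsPref A v w) : IsPref A v (g w) := by
  have h1 := apply_pref hg hw
  rwa [suppIn_fix hg h] at h1

theorem not_pref_apply_of_moves {g : Perm (Vertex A)} (hg : g ∈ treeAut A)
    {v w : Vertex A} (hmv : g v ≠ v) (hw : IsPref A v w) : ¬ IsPref A v (g w) := by
  intro hcon
  have h1 : IsPref A (g v) (g w) := apply_pref hg hw
  have hl : (g v).1 = v.1 := level_eq hg v
  exact hmv (isPref_unique h1 hcon hl)

theorem mem_rist_iff {G : Subgroup (Perm (Vertex A))} {v : Vertex A}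
    {g : Perm (Vertex A)} : g ∈ rist A G v ↔ g ∈ G ∧ SuppIn v g := Iff.rfl

theorem rist_mono {G : Subgroup (Perm (Vertex A))} {v w : Vertex A}
    (h : IsPref A v w) : rist A G w ≤ rist A G v := by
  intro g hg
  rw [mem_rist_iff] at hg ⊢
  exact ⟨hg.1, fun z hz => hg.2 z fun hwz => hz (isPref_trans h hwz)⟩

/-- Disjointness of supports: if `a` moves `u` and `1 ≠ b` is supported below `u`,
then `a` and `b` do not commute. -/
theorem commutator_ne_one {a b : Perm (Vertex A)} (ha : a ∈ treeAut A) {u : Vertex A}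
    (hau : a u ≠ u) (hb : SuppIn u b) (hbne : b ≠ 1) : ⁅a, b⁆ ≠ 1 := by
  obtain ⟨z₀, hz₀⟩ : ∃ z, b z ≠ z := by
    by_contra hcon; push_neg at hcon
    exact hbne (Equiv.ext fun z => by simpa using hcon z)
  set z := b z₀ with hz
  have hz' : b⁻¹ z = z₀ := by simp [hz]
  have hzz : b⁻¹ z ≠ z := by rw [hz']; exact fun hc => hz₀ hc.symm
  have hpz' : IsPref A u (b⁻¹ z) := by
    by_contra hp
    have hfix := hb _ hp
    rw [Equiv.Perm.apply_inv_self] at hfix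
    exact hzz hfix.symm
  have hnp : ¬ IsPref A u (a⁻¹ (b⁻¹ z)) := by
    intro hcon
    have h1 : IsPref A (a⁻¹ u) (a⁻¹ (b⁻¹ z)) := apply_pref ((treeAut A).inv_mem ha) hpz'
    have hl : (a⁻¹ u).1 = u.1 := level_eq ((treeAut A).inv_mem ha) u
    have : a⁻¹ u = u := isPref_unique h1 hcon hl
    exact hau (by conv_lhs => rw [← this]; simp)
  intro hcon
  have := congrArg (fun p : Perm (Vertex A) => p z) hcon
  simp only [commutatorElement_def, Equiv.Perm.mul_apply, Equiv.Perm.one_apply] at this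
  rw [hb _ hnp, Equiv.Perm.apply_inv_self] at this
  exact hzz this

theorem derivedIter_le_self {P : Type*} [Group P] (H : Subgroup P) :
    ∀ d, derivedIter H d ≤ H := by
  intro d
  induction d with
  | zero => exact le_refl _
  | succ d ih =>
    refine (Subgroup.commutator_le).mpr fun x hx y hy => ?_
    have hx' := ih hx; have hy' := ih hy
    exact H.mul_mem (H.mul_mem (H.mul_mem hx' hy') (H.inv_mem hx')) (H.inv_mem hy')

theorem derivedIter_mono {P : Type*} [Group P] {H K : Subgroup P} (h : H ≤ K) :
    ∀ d, derivedIter H d ≤ derivedIter K d := by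
  intro d
  induction d with
  | zero => exact h
  | succ d ih => exact Subgroup.commutator_mono ih ih

/-- In a weakly branch group, every iterated derived subgroup of every rigid
stabiliser is nontrivial. -/
theorem exists_ne_one_derivedIter {G : Subgroup (Perm (Vertex A))}
    (hG : IsWeaklyBranch A G) :
    ∀ (d : ℕ) (v : Vertex A), ∃ b ∈ derivedIter (rist A G v) d, b ≠ 1 := by
  obtain ⟨hGA, _, hr⟩ := hG
  intro d
  induction d with
  | zero =>
    intro v
    by_contra hcon; push_neg at hcon
    exact hr v ((Subgroup.eq_bot_iff_forall _).mpr hcon)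
  | succ d ih =>
    intro v
    obtain ⟨a, haD, hane⟩ := ih v
    have haR : a ∈ rist A G v := derivedIter_le_self _ d haD
    obtain ⟨w, hw⟩ : ∃ w, a w ≠ w := by
      by_contra hcon; push_neg at hcon
      exact hane (Equiv.ext fun z => by simpa using hcon z)
    have hpref : IsPref A v w := by
      by_contra hp; exact hw ((mem_rist_iff.mp haR).2 w hp)
    obtain ⟨b, hbD, hbne⟩ := ih w
    have hbR : b ∈ rist A G w := derivedIter_le_self _ d hbD
    refine ⟨⁅a, b⁆, ?_, ?_⟩
    · exact Subgroup.commutator_mem_commutator haD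
        (derivedIter_mono (rist_mono hpref) d hbD)
    · exact commutator_ne_one (hGA (mem_rist_iff.mp haR).1) hw
        (mem_rist_iff.mp hbR).2 hbne

/-- The key commutator identity: if `h` moves `v` and `x`, `y` are supported
below `v`, then `⁅⁅h, x⁆, y⁆ = ⁅x⁻¹, y⁆`. -/
theorem key_commutator_eq {h x y : Perm (Vertex A)} (hh : h ∈ treeAut A)
    (hx : x ∈ treeAut A) (hy : y ∈ treeAut A) {v : Vertex A} (hhv : h v ≠ v)
    (hxs : SuppIn v x) (hys : SuppIn v y) : ⁅⁅h, x⁆, y⁆ = ⁅x⁻¹, y⁆ := by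
  have hhinv : h⁻¹ ∈ treeAut A := (treeAut A).inv_mem hh
  have hxinv : x⁻¹ ∈ treeAut A := (treeAut A).inv_mem hx
  have hhv' : h⁻¹ v ≠ v := fun hc => hhv (by conv_lhs => rw [← hc]; simp)
  have claimA : ∀ w, IsPref A v w → (x * ⁅h, x⁆) w = w := by
    intro w hw
    have h1 : IsPref A v (x⁻¹ w) := suppIn_pref_apply hxinv (suppIn_inv hxs) hw
    have h2 : ¬ IsPref A v (h⁻¹ (x⁻¹ w)) := not_pref_apply_of_moves hhinv hhv' h1
    have h3 : x (h⁻¹ (x⁻¹ w)) = h⁻¹ (x⁻¹ w) := hxs _ h2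
    simp only [commutatorElement_def, Equiv.Perm.mul_apply]
    rw [h3]
    simp
  have claimB : ∀ w, (x * ⁅h, x⁆) (y w) = y ((x * ⁅h, x⁆) w) := by
    intro w
    by_cases hw : IsPref A v w
    · rw [claimA w hw, claimA (y w) (suppIn_pref_apply hy hys hw)]
    · have hyw : y w = w := hys w hw
      have hdw : ¬ IsPref A v ((x * ⁅h, x⁆) w) := by
        intro hcon
        have h5 := claimA _ hcon
        exact hw ((x * ⁅h, x⁆).injective h5 ▸ hcon)
      rw [hyw, hys _ hdw]
  have hcomm : x * ⁅h, x⁆ * y = y * (x * ⁅h, x⁆) := by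
    apply Equiv.ext
    intro w
    simp only [Equiv.Perm.mul_apply]
    exact claimB w
  have h2 : ⁅h, x⁆ * y * ⁅h, x⁆⁻¹ = x⁻¹ * y * x := by
    calc ⁅h, x⁆ * y * ⁅h, x⁆⁻¹
        = x⁻¹ * (x * ⁅h, x⁆ * y) * ⁅h, x⁆⁻¹ := by group
      _ = x⁻¹ * (y * (x * ⁅h, x⁆)) * ⁅h, x⁆⁻¹ := by rw [hcomm]
      _ = x⁻¹ * y * x := by group
  calc ⁅⁅h, x⁆, y⁆ = (⁅h, x⁆ * y * ⁅h, x⁆⁻¹) * y⁻¹ := by group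
    _ = x⁻¹ * y * x * y⁻¹ := by rw [h2]
    _ = ⁅x⁻¹, y⁆ := by group

theorem commutator_mem_of_normalIn {P : Type*} [Group P] {N K : Subgroup P}
    (hn : NormalIn N K) {a b : P} (ha : a ∈ N) (hb : b ∈ K) : ⁅a, b⁆ ∈ N := by
  have h1 : b * a⁻¹ * b⁻¹ ∈ N := hn.2 b hb a⁻¹ (N.inv_mem ha)
  have h2 : a * (b * a⁻¹ * b⁻¹) ∈ N := N.mul_mem ha h1
  simpa [commutatorElement_def, mul_assoc] using h2

theorem chain_le {P : Type*} [Group P] {k : ℕ} {c : ℕ → Subgroup P}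
    (hnorm : ∀ i < k, NormalIn (c (i + 1)) (c i)) :
    ∀ i ≤ k, c k ≤ c i := by
  have key : ∀ m i, i + m = k → c k ≤ c i := by
    intro m
    induction m with
    | zero => intro i hi; simp only [Nat.add_zero] at hi; rw [hi]
    | succ m ih =>
      intro i hi
      have h1 : c k ≤ c (i + 1) := ih (i + 1) (by omega)
      exact le_trans h1 (hnorm i (by omega)).1
  intro i hi
  exact key (k - i) i (by omega)

theorem subnormalIn_le {P : Type*} [Group P] {H G : Subgroup P} {k : ℕ}
    (h : SubnormalIn H G k) : H ≤ G := by
  obtain ⟨c, hc0, hck, hnorm⟩ := h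
  rw [← hc0, ← hck]
  exact chain_le hnorm 0 (Nat.zero_le _)

/-- Descent along a subnormal chain: if some element of `H` moves `v`, then `H`
contains the `k`-th derived subgroup of `rist_G(v)`. -/
theorem derivedIter_rist_le_subnormal {G H : Subgroup (Perm (Vertex A))}
    (hGAut : G ≤ treeAut A) {k : ℕ} (hsub : SubnormalIn H G k) {v : Vertex A}
    {h₀ : Perm (Vertex A)} (hh₀ : h₀ ∈ H) (hmv : h₀ v ≠ v) :
    derivedIter (rist A G v) k ≤ H := by
  obtain ⟨c, hc0, hck, hnorm⟩ := hsub
  have hHle : ∀ i ≤ k, H ≤ c i := by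
    intro i hi; rw [← hck]; exact chain_le hnorm i hi
  have hh₀G : h₀ ∈ G := by rw [← hc0]; exact hHle 0 (Nat.zero_le _) hh₀
  have hh₀A : h₀ ∈ treeAut A := hGAut hh₀G
  have main : ∀ i ≤ k, derivedIter (rist A G v) i ≤ c i := by
    intro i
    induction i with
    | zero =>
      intro _; rw [hc0]
      exact fun g hg => (mem_rist_iff.mp hg).1
    | succ i ih =>
      intro hik
      have hik' : i ≤ k := by omega
      have hletop := ih hik'
      refine (Subgroup.commutator_le).mpr fun p hp q hq => ?_
      have hpR : p ∈ rist A G v := derivedIter_le_self _ i hp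
      have hqR : q ∈ rist A G v := derivedIter_le_self _ i hq
      have hpA : p ∈ treeAut A := hGAut (mem_rist_iff.mp hpR).1
      have hqA : q ∈ treeAut A := hGAut (mem_rist_iff.mp hqR).1
      have hkey : ⁅⁅h₀, p⁻¹⁆, q⁆ = ⁅p⁻¹⁻¹, q⁆ :=
        key_commutator_eq hh₀A ((treeAut A).inv_mem hpA) hqA hmv
          (suppIn_inv (mem_rist_iff.mp hpR).2) (mem_rist_iff.mp hqR).2
      have hN : NormalIn (c (i + 1)) (c i) := hnorm i (by omega)
      have hh₀ci : h₀ ∈ c (i + 1) := hHle (i + 1) hik hh₀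
      have hq1 : ⁅h₀, p⁻¹⁆ ∈ c (i + 1) :=
        commutator_mem_of_normalIn hN hh₀ci ((c i).inv_mem (hletop hp))
      have hq2 : ⁅⁅h₀, p⁻¹⁆, q⁆ ∈ c (i + 1) :=
        commutator_mem_of_normalIn hN hq1 (hletop hq)
      rw [hkey, inv_inv] at hq2
      exact hq2
  rw [← hck]
  exact main k (le_refl _)

theorem moves_deeper {g : Perm (Vertex A)} (hg : g ∈ treeAut A) {ξ : Boundary A}
    {n m : ℕ} (hnm : n ≤ m)
    (h : g (bdryPrefix A ξ n) ≠ bdryPrefix A ξ n) :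
    g (bdryPrefix A ξ m) ≠ bdryPrefix A ξ m := by
  intro he
  have hpf : IsPref A (bdryPrefix A ξ n) (bdryPrefix A ξ m) :=
    ⟨show n ≤ m from hnm, fun i => rfl⟩
  exact h (fix_pref hg hpf he)

end Aux


/-- Commuting subnormal subgroups of a weakly branch group have
disjoint supports on the boundary of the tree. -/
theorem supp_disjoint_of_commute
    (A : ℕ → Type) [∀ i, Fintype (A i)] (hcard : ∀ i, 2 ≤ Fintype.card (A i))
    (G H₁ H₂ : Subgroup (Perm (Vertex A))) (hG : IsWeaklyBranch A G)
    (k₁ : ℕ) (h1 : SubnormalIn H₁ G k₁) (k₂ : ℕ) (h2 : SubnormalIn H₂ G k₂)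
    (hcomm : ⁅H₁, H₂⁆ = (⊥ : Subgroup (Perm (Vertex A)))) :
    supp A H₁ ∩ supp A H₂ = ∅ := by
  rw [Set.eq_empty_iff_forall_notMem]
  rintro ξ ⟨⟨g₁, hg₁H, n₁, hn₁⟩, ⟨g₂, hg₂H, n₂, hn₂⟩⟩
  have hGA : G ≤ treeAut A := hG.1
  have hg₁G : g₁ ∈ G := subnormalIn_le h1 hg₁H
  have hg₂G : g₂ ∈ G := subnormalIn_le h2 hg₂H
  set v := bdryPrefix A ξ (max n₁ n₂) with hv
  have hm₁ : g₁ v ≠ v := moves_deeper (hGA hg₁G) (le_max_left _ _) hn₁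
  have hm₂ : g₂ v ≠ v := moves_deeper (hGA hg₂G) (le_max_right _ _) hn₂
  obtain ⟨b, hbD, hbne⟩ := exists_ne_one_derivedIter hG k₂ v
  have hbH₂ : b ∈ H₂ := derivedIter_rist_le_subnormal hGA h2 hg₂H hm₂ hbD
  have hbR : b ∈ rist A G v := derivedIter_le_self _ _ hbD
  have hne := commutator_ne_one (hGA hg₁G) hm₁ (mem_rist_iff.mp hbR).2 hbne
  apply hne
  open scoped commutatorElement in
  have hmem : ⁅g₁, b⁆ ∈ ⁅H₁, H₂⁆ := Subgroup.commutator_mem_commutator hg₁H hbH₂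
  rw [hcomm] at hmem
  exact Subgroup.mem_bot.mp hmem


end PaperDefs
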